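/- For every integer j with 2 ≤ j ≤ m and every I ⊆ {1, …, m+1−j}: δ(w_{ρ_{m+1−j}^I}) = (−1)^((m+1−j)(m+2−j)/2 − s(I)) w^*_{μ_{j−1}^I} and δ(w_{μ_{m+1−j}^I}) = (−1)^(m(m+1)/2 − j(j−1)/2 + s(I)) w^*_{ρ_{j−1}^I}, where both sides of the second identity are interpreted as 0 when I ⊄ {1, …, j−1} (in which case μ_{m+1−j}^I is not strict and ρ_{j−1}^I is undefined). In particular, PD(ρ_{m+1−j}^I) = μ_{j−1}^I, and PD(μ_{m+1−j}^I) = ρ_{j−1}^I whenever μ_{m+1−j}^I is a strict partition. -/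
import Mathlib


/-!
Formalization of a statement from "A Landau-Ginzburg model for Lagrangian
Grassmannians, Langlands duality, and relations in quantum cohomology"
(arXiv:1304.4958).

Conventions: `V = ℂ^(2m+1)` with 0-based coordinates (`a : Fin (2m+1)`
corresponds to the paper's 1-based basis index `i = a+1`);
`ε(i) = (−1)^(m+1−i)`, written as `(−1)^(m+1+i)` which has the same parity.
-/

noncomputable section
open scoped BigOperators

def eps (m i : ℕ) : ℂ := (-1 : ℂ) ^ (m + 1 + i)

/-- The spin representation `V_Spin = ⋀•W`, modelled by coordinates with respect to its
basis `{w_I}` indexed by the subsets `I ⊆ {1,…,m}` (encoded as `Finset (Fin m)`: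
the element `a : Fin m` stands for the paper index `a+1`, i.e. the basis vector
`v_{a+1}` of `W`). -/
abbrev VS (m : ℕ) := Finset (Fin m) → ℂ

/-- The basis vector `w_I` of `V_Spin`. -/
def wB {m : ℕ} (I : Finset (Fin m)) : VS m := fun L => if L = I then 1 else 0

/-- `|λ(I)| = Σ_{a ∈ I} (m − a)`: the weight of the strict partition whose index set is
`I` (the element `a : Fin m`, i.e. paper index `a+1 = m+1−p`, corresponds to the part
`p = m−a`). -/
def psum (m : ℕ) (I : Finset (Fin m)) : ℕ := ∑ a ∈ I, (m - (a : ℕ))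

/-- The dual basis vector `w*_K ∈ V_Spin^*`, the coordinate functional at `K`. -/
def wStar {m : ℕ} (K : Finset (Fin m)) : Module.Dual ℂ (VS m) := LinearMap.proj K

/-- The linear map `δ : V_Spin → V_Spin^*` determined by
`δ(w_λ) = (−1)^{|λ|} w*_{PD(λ)}`; Poincaré duality `PD` corresponds to complementation
of index subsets of `{1,…,m}`. -/
def deltaF (m : ℕ) : VS m →ₗ[ℂ] Module.Dual ℂ (VS m) where
  toFun f := ∑ I : Finset (Fin m), ((-1 : ℂ) ^ (psum m I) * f I) • wStar Iᶜ
  map_add' f g := by simp [mul_add, add_smul, Finset.sum_add_distrib]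
  map_smul' c f := by simp [Finset.smul_sum, smul_smul, mul_left_comm]

/-- The index set `I(λ) ⊆ {1,…,m}` (as a `Finset (Fin m)`) of the strict partition with
set of parts `P`: the part `p ∈ P` corresponds to the paper index `m+1−p`, i.e. to
`a : Fin m` with `a = m−p`. -/
def IofP (m : ℕ) (P : Finset ℕ) : Finset (Fin m) :=
  Finset.univ.filter (fun a => m - (a : ℕ) ∈ P)

/-- The basis vector `w_λ` of `V_Spin`, for the strict partition `λ` whose set of parts is
`P ⊆ {1,…,m}`. -/
def wP (m : ℕ) (P : Finset ℕ) : VS m := wB (IofP m P)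

/-- `s(J) = Σ_{j ∈ J} j`. -/
def sJ (J : Finset ℕ) : ℕ := ∑ j ∈ J, j

/-- `w_{μ_l^J}`: `μ_l = (m, m−1, …, m+1−l)` has set of parts `Icc (m+1−l) m`; `μ_l^J` adds
to it a row of length `j` for each `j ∈ J`, and `w_{μ_l^J} = 0` if the result is not a
strict partition. -/
def wMu (m l : ℕ) (J : Finset ℕ) : VS m :=
  if Disjoint (Finset.Icc (m + 1 - l) m) J then wP m (Finset.Icc (m + 1 - l) m ∪ J) else 0

private lemma two_mul_sum_Icc (l : ℕ) : 2 * sJ (Finset.Icc 1 l) = l * (l + 1) := by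
  induction l with
  | zero => simp [sJ]
  | succ n ih =>
    simp only [sJ] at *
    rw [Finset.sum_Icc_succ_top (by omega : 1 ≤ n + 1)]
    calc 2 * ((∑ k ∈ Finset.Icc 1 n, k) + (n+1)) = 2 * ∑ k ∈ Finset.Icc 1 n, k + 2*(n+1) := by ring
      _ = n*(n+1) + 2*(n+1) := by rw [ih]
      _ = (n+1)*(n+1+1) := by ring

private lemma sum_Icc_eq_range (n : ℕ) (g : ℕ → ℕ) :
    ∑ p ∈ Finset.Icc 1 n, g p = ∑ i ∈ Finset.range n, g (i + 1) := by
  induction n with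
  | zero => simp
  | succ k ih => rw [Finset.sum_Icc_succ_top (by omega : 1 ≤ k + 1), Finset.sum_range_succ, ih]

private lemma psum_IofP (m : ℕ) (P : Finset ℕ) (hP : P ⊆ Finset.Icc 1 m) :
    psum m (IofP m P) = sJ P := by
  classical
  set g : ℕ → ℕ := fun p => if p ∈ P then p else 0 with hg
  have h1 : psum m (IofP m P) = ∑ i ∈ Finset.range m, g (m - i) := by
    rw [psum, IofP, Finset.sum_filter]
    rw [← Fin.sum_univ_eq_sum_range (fun i => g (m - i)) m]
  have h2 : ∑ i ∈ Finset.range m, g (m - i) = ∑ i ∈ Finset.range m, g (i + 1) := by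
    rw [← Finset.sum_range_reflect (fun i => g (i + 1)) m]
    apply Finset.sum_congr rfl
    intro a ha
    have : a < m := Finset.mem_range.mp ha
    congr 1
    omega
  have h3 : sJ P = ∑ p ∈ Finset.Icc 1 m, g p := by
    rw [sJ,
      show (∑ p ∈ P, p) = ∑ p ∈ P, g p from Finset.sum_congr rfl (fun x hx => by simp [hg, hx])]
    exact Finset.sum_subset hP (fun x _ hx => by simp [hg, hx])
  rw [h1, h2, h3, sum_Icc_eq_range]

private lemma compl_IofP (m : ℕ) (P : Finset ℕ) :
    (IofP m P)ᶜ = IofP m (Finset.Icc 1 m \ P) := by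
  ext a
  have := a.isLt
  simp only [IofP, Finset.mem_compl, Finset.mem_filter, Finset.mem_univ, true_and,
    Finset.mem_sdiff, Finset.mem_Icc]
  constructor
  · intro h; exact ⟨⟨by omega, by omega⟩, h⟩
  · rintro ⟨-, h⟩; exact h

private lemma deltaF_wB (m : ℕ) (K : Finset (Fin m)) :
    deltaF m (wB K) = ((-1 : ℂ) ^ psum m K) • wStar Kᶜ := by
  show (∑ I : Finset (Fin m), ((-1 : ℂ) ^ (psum m I) * wB K I) • wStar Iᶜ) = _
  rw [Finset.sum_eq_single K]
  · simp [wB]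
  · intro I _ hIK; simp [wB, hIK]
  · intro h; exact absurd (Finset.mem_univ K) h

private lemma deltaF_wP (m : ℕ) (P : Finset ℕ) (hP : P ⊆ Finset.Icc 1 m) :
    deltaF m (wP m P) = ((-1 : ℂ) ^ sJ P) • wStar (IofP m (Finset.Icc 1 m \ P)) := by
  rw [wP, deltaF_wB, psum_IofP m P hP, compl_IofP]

/-- For every `2 ≤ j ≤ m` and every `I ⊆ {1,…,m+1−j}`:
`δ(w_{ρ_{m+1−j}^I}) = (−1)^((m+1−j)(m+2−j)/2 − s(I)) w*_{μ_{j−1}^I}` and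
`δ(w_{μ_{m+1−j}^I}) = (−1)^(m(m+1)/2 − j(j−1)/2 + s(I)) w*_{ρ_{j−1}^I}`, where both sides
of the second identity are interpreted as `0` when `I ⊄ {1,…,j−1}`. In particular,
`PD(ρ_{m+1−j}^I) = μ_{j−1}^I`, and `PD(μ_{m+1−j}^I) = ρ_{j−1}^I` whenever `μ_{m+1−j}^I`
is a strict partition. (Sets of parts: `ρ_l ↔ Icc 1 l`, `μ_l ↔ Icc (m+1−l) m`; `PD` is
complementation of the set of parts in `Icc 1 m`.) -/
theorem delta_on_rho_and_mu (m j : ℕ) (hm : 2 ≤ m) (hj : 2 ≤ j) (hjm : j ≤ m)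
    (I : Finset ℕ) (hI : I ⊆ Finset.Icc 1 (m + 1 - j)) :
    deltaF m (wP m (Finset.Icc 1 (m + 1 - j) \ I))
        = ((-1 : ℂ) ^ ((m + 1 - j) * (m + 2 - j) / 2 - sJ I)) •
            wStar (IofP m (Finset.Icc (m + 2 - j) m ∪ I)) ∧
    deltaF m (wMu m (m + 1 - j) I)
        = (if I ⊆ Finset.Icc 1 (j - 1)
            then ((-1 : ℂ) ^ ((m * (m + 1) / 2 - j * (j - 1) / 2) + sJ I)) •
              wStar (IofP m (Finset.Icc 1 (j - 1) \ I))
            else 0) ∧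
    Finset.Icc 1 m \ (Finset.Icc 1 (m + 1 - j) \ I) = Finset.Icc (m + 2 - j) m ∪ I ∧
    (I ⊆ Finset.Icc 1 (j - 1) →
      Finset.Icc 1 m \ (Finset.Icc j m ∪ I) = Finset.Icc 1 (j - 1) \ I) := by
  classical
  have h3 : Finset.Icc 1 m \ (Finset.Icc 1 (m + 1 - j) \ I)
      = Finset.Icc (m + 2 - j) m ∪ I := by
    ext x
    by_cases hxI : x ∈ I
    · have hb := Finset.mem_Icc.mp (hI hxI)
      simp only [hxI, Finset.mem_sdiff, Finset.mem_Icc, Finset.mem_union]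
      simp only [not_true, and_false, not_false_eq_true, and_true, or_true, iff_true]
      omega
    · simp only [hxI, Finset.mem_sdiff, Finset.mem_Icc, Finset.mem_union, not_false_eq_true,
        and_true, or_false, not_not]
      omega
  have h4 : I ⊆ Finset.Icc 1 (j - 1) →
      Finset.Icc 1 m \ (Finset.Icc j m ∪ I) = Finset.Icc 1 (j - 1) \ I := by
    intro hIj
    ext x
    by_cases hxI : x ∈ I
    · have hb := Finset.mem_Icc.mp (hIj hxI)
      simp only [hxI, Finset.mem_sdiff, Finset.mem_Icc, Finset.mem_union, or_true,
        not_true, and_false, iff_false, not_and, not_not]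
    · simp only [hxI, Finset.mem_sdiff, Finset.mem_Icc, Finset.mem_union, or_false,
        not_false_eq_true, and_true, not_and, not_le]
      omega
  refine ⟨?_, ?_, h3, h4⟩
  · have hsub : Finset.Icc 1 (m + 1 - j) \ I ⊆ Finset.Icc 1 m := by
      intro x hx
      have := Finset.mem_Icc.mp (Finset.mem_sdiff.mp hx).1
      simp only [Finset.mem_Icc]; omega
    rw [deltaF_wP m _ hsub, h3]
    congr 2
    have hsplit := Finset.sum_sdiff (f := fun x => x) hI
    have h2 := two_mul_sum_Icc (m + 1 - j)
    have he : m + 2 - j = (m + 1 - j) + 1 := by omega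
    rw [he]
    simp only [sJ] at *
    set T := (m + 1 - j) * (m + 1 - j + 1) with hT
    clear_value T
    omega
  · have hj1 : m + 1 - (m + 1 - j) = j := by omega
    rw [wMu, hj1]
    by_cases hIj : I ⊆ Finset.Icc 1 (j - 1)
    · have hdisj : Disjoint (Finset.Icc j m) I := by
        rw [Finset.disjoint_left]
        intro x hx hxI
        have h1 := Finset.mem_Icc.mp (hIj hxI)
        have h2 := Finset.mem_Icc.mp hx
        omega
      have hsub : Finset.Icc j m ∪ I ⊆ Finset.Icc 1 m := by
        intro x hx
        rcases Finset.mem_union.mp hx with h | h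
        · have := Finset.mem_Icc.mp h; simp only [Finset.mem_Icc]; omega
        · have := Finset.mem_Icc.mp (hI h); simp only [Finset.mem_Icc]; omega
      rw [if_pos hdisj, if_pos hIj, deltaF_wP m _ hsub, h4 hIj]
      congr 2
      have hu : sJ (Finset.Icc j m ∪ I) = sJ (Finset.Icc j m) + sJ I := by
        simp only [sJ]; rw [Finset.sum_union hdisj]
      have hun : Finset.Icc 1 (j - 1) ∪ Finset.Icc j m = Finset.Icc 1 m := by
        ext x; simp only [Finset.mem_union, Finset.mem_Icc]; omega
      have hdisj2 : Disjoint (Finset.Icc 1 (j - 1)) (Finset.Icc j m) := by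
        rw [Finset.disjoint_left]
        intro x h1 h2
        have := Finset.mem_Icc.mp h1
        have := Finset.mem_Icc.mp h2
        omega
      have hsplit : sJ (Finset.Icc 1 (j - 1)) + sJ (Finset.Icc j m) = sJ (Finset.Icc 1 m) := by
        simp only [sJ]; rw [← Finset.sum_union hdisj2, hun]
      have h2m := two_mul_sum_Icc m
      have h2j := two_mul_sum_Icc (j - 1)
      have hjj : j * (j - 1) = (j - 1) * (j - 1 + 1) := by
        have h : j - 1 + 1 = j := by omega
        rw [h]; ring
      rw [hjj]
      set A := m * (m + 1) with hA
      set B := (j - 1) * (j - 1 + 1) with hB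
      clear_value A B
      omega
    · have hnd : ¬ Disjoint (Finset.Icc j m) I := by
        intro hd
        apply hIj
        intro x hx
        have h1 := Finset.mem_Icc.mp (hI hx)
        have h2 := Finset.disjoint_right.mp hd hx
        simp only [Finset.mem_Icc] at h2 ⊢
        omega
      rw [if_neg hnd, if_neg hIj, map_zero]


end
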